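/- Let D and D̃ be dictionaries with ‖D − D̃‖_{1,2} ≤ λ, and let ã* be a minimizer of the LASSO objective for D̃ at x. Then | ‖D ã*‖_2² − ‖D̃ ã*‖_2² | ≤ ( (3/4)‖x‖_2 + 2 ) ‖x‖_2³ · ‖D − D̃‖_{1,2} / λ. -/

import Mathlib

open Finset Matrix

noncomputable def norm2 {ι : Type*} [Fintype ι] (v : ι → ℝ) : ℝ :=
  Real.sqrt (∑ i, v i ^ 2)

noncomputable def norm1 {ι : Type*} [Fintype ι] (v : ι → ℝ) : ℝ :=
  ∑ i, |v i|

noncomputable def norm0 {ι : Type*} (v : ι → ℝ) : ℕ :=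
  Set.ncard {i | v i ≠ 0}

noncomputable def dot {ι : Type*} [Fintype ι] (u v : ι → ℝ) : ℝ :=
  ∑ i, u i * v i

def col {d m : ℕ} (D : Matrix (Fin d) (Fin m) ℝ) (i : Fin m) : Fin d → ℝ :=
  fun r => D r i

def IsDictionary {d m : ℕ} (D : Matrix (Fin d) (Fin m) ℝ) : Prop :=
  ∀ i, norm2 (_root_.col D i) = 1

noncomputable def norm12 {d m : ℕ} (E : Matrix (Fin d) (Fin m) ℝ) : ℝ :=
  ⨆ i : Fin m, norm2 (_root_.col E i)

noncomputable def lassoObj {d m : ℕ} (lam : ℝ) (D : Matrix (Fin d) (Fin m) ℝ)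
    (x : Fin d → ℝ) (z : Fin m → ℝ) : ℝ :=
  (1/2) * (norm2 (x - D.mulVec z))^2 + lam * norm1 z

def IsLassoMin {d m : ℕ} (lam : ℝ) (D : Matrix (Fin d) (Fin m) ℝ)
    (x : Fin d → ℝ) (a : Fin m → ℝ) : Prop :=
  ∀ z, lassoObj lam D x a ≤ lassoObj lam D x z

def Incoherent {d m : ℕ} (mu : ℝ) (D : Matrix (Fin d) (Fin m) ℝ) : Prop :=
  ∀ i j, i ≠ j → |dot (_root_.col D i) (_root_.col D j)| ≤ mu / Real.sqrt d

noncomputable def kMargin {d m : ℕ} (lam : ℝ) (k : ℕ) (D : Matrix (Fin d) (Fin m) ℝ)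
    (x : Fin d → ℝ) (a : Fin m → ℝ) : ℝ :=
  ⨆ I : {I : Finset (Fin m) // I.card = m - k},
    ⨅ j : {j : Fin m // j ∈ I.1}, (lam - |dot (_root_.col D j.1) (x - D.mulVec a)|)

/- Comparing the LASSO value at `ã*` with its value at `0` gives both
`‖x − D̃ã*‖ ≤ ‖x‖` (so `‖D̃ã*‖ ≤ 2‖x‖`) and `λ‖ã*‖₁ ≤ ‖x‖²/2`. The perturbation
`‖(D − D̃)ã*‖ ≤ ‖D − D̃‖_{1,2}‖ã*‖₁` is therefore at most `‖D − D̃‖_{1,2}‖x‖²/(2λ)`, which is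
`≤ ‖x‖²/2` because `‖D − D̃‖_{1,2} ≤ λ`, and `|‖u‖² − ‖v‖²| ≤ (2‖v‖ + ‖u − v‖)‖u − v‖`
finishes the estimate. -/

lemma abs_sq_norm_sub_sq_norm_le {E : Type*} [SeminormedAddCommGroup E] (u v : E) :
    |‖u‖ ^ 2 - ‖v‖ ^ 2| ≤ (2 * ‖v‖ + ‖u - v‖) * ‖u - v‖ := by
  rw [sq_sub_sq, abs_mul, abs_of_nonneg (by positivity)]
  have hu : ‖u‖ ≤ ‖v‖ + ‖u - v‖ := norm_le_norm_add_norm_sub' u v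
  exact mul_le_mul (by linarith) (abs_norm_sub_norm_le u v) (abs_nonneg _) (by positivity)

section norm2

variable {ι : Type*} [Fintype ι]

lemma norm2_eq_norm (v : ι → ℝ) : norm2 v = ‖WithLp.toLp 2 v‖ := by
  simp [EuclideanSpace.norm_eq, norm2]

lemma norm2_nonneg (v : ι → ℝ) : 0 ≤ norm2 v :=
  Real.sqrt_nonneg _

lemma norm1_nonneg (v : ι → ℝ) : 0 ≤ norm1 v :=
  Finset.sum_nonneg fun i _ => abs_nonneg (v i)

lemma norm2_sub_le (u v : ι → ℝ) : norm2 (u - v) ≤ norm2 u + norm2 v := by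
  simpa only [norm2_eq_norm, WithLp.toLp_sub] using norm_sub_le _ _

lemma abs_sq_norm2_sub_sq_norm2_le (u v : ι → ℝ) :
    |norm2 u ^ 2 - norm2 v ^ 2| ≤ (2 * norm2 v + norm2 (u - v)) * norm2 (u - v) := by
  simpa only [norm2_eq_norm, WithLp.toLp_sub] using abs_sq_norm_sub_sq_norm_le _ _

end norm2

lemma norm2_col_le_norm12 {d m : ℕ} (E : Matrix (Fin d) (Fin m) ℝ) (i : Fin m) :
    norm2 (_root_.col E i) ≤ norm12 E :=
  le_ciSup (f := fun i => norm2 (_root_.col E i)) (Set.finite_range _).bddAbove i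

lemma norm12_nonneg {d m : ℕ} (E : Matrix (Fin d) (Fin m) ℝ) : 0 ≤ norm12 E :=
  Real.iSup_nonneg fun _ => norm2_nonneg _

lemma mulVec_eq_sum_smul_col {d m : ℕ} (E : Matrix (Fin d) (Fin m) ℝ) (a : Fin m → ℝ) :
    E *ᵥ a = ∑ i, a i • _root_.col E i := by
  ext r
  simp [Matrix.mulVec, dotProduct, _root_.col, mul_comm]

lemma norm2_mulVec_le_norm12_mul_norm1 {d m : ℕ} (E : Matrix (Fin d) (Fin m) ℝ)
    (a : Fin m → ℝ) : norm2 (E *ᵥ a) ≤ norm12 E * norm1 a := by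
  rw [norm2_eq_norm, mulVec_eq_sum_smul_col, WithLp.toLp_sum, norm1, Finset.mul_sum]
  refine (norm_sum_le _ _).trans (Finset.sum_le_sum fun i _ => ?_)
  rw [WithLp.toLp_smul, norm_smul, Real.norm_eq_abs, ← norm2_eq_norm, mul_comm]
  exact mul_le_mul_of_nonneg_right (norm2_col_le_norm12 E i) (abs_nonneg _)

namespace IsLassoMin

variable {d m : ℕ} {lam : ℝ} {D : Matrix (Fin d) (Fin m) ℝ} {x : Fin d → ℝ} {a : Fin m → ℝ}

lemma lassoObj_le_half_sq_norm2 (h : IsLassoMin lam D x a) :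
    lassoObj lam D x a ≤ norm2 x ^ 2 / 2 :=
  (h 0).trans_eq (by simp [lassoObj, norm1]; ring)

lemma lam_mul_norm1_le (h : IsLassoMin lam D x a) : lam * norm1 a ≤ norm2 x ^ 2 / 2 := by
  have := h.lassoObj_le_half_sq_norm2
  unfold lassoObj at this
  linarith [sq_nonneg (norm2 (x - D *ᵥ a))]

lemma norm2_sub_mulVec_le (hlam : 0 ≤ lam) (h : IsLassoMin lam D x a) :
    norm2 (x - D *ᵥ a) ≤ norm2 x := by
  have := h.lassoObj_le_half_sq_norm2
  unfold lassoObj at this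
  have hsq : norm2 (x - D *ᵥ a) ^ 2 ≤ norm2 x ^ 2 := by
    nlinarith [mul_nonneg hlam (norm1_nonneg a)]
  exact pow_le_pow_iff_left₀ (norm2_nonneg _) (norm2_nonneg _) two_ne_zero |>.1 hsq

lemma norm2_mulVec_le (hlam : 0 ≤ lam) (h : IsLassoMin lam D x a) :
    norm2 (D *ᵥ a) ≤ 2 * norm2 x := by
  have := norm2_sub_le x (x - D *ᵥ a)
  rw [sub_sub_cancel] at this
  linarith [h.norm2_sub_mulVec_le hlam]

end IsLassoMin

theorem reconstructor_cross_norm_stability_general {d m : ℕ} (lam : ℝ) (hlam : 0 < lam)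
    (D Dt : Matrix (Fin d) (Fin m) ℝ)
    (hclose : norm12 (D - Dt) ≤ lam) (x : Fin d → ℝ)
    (at' : Fin m → ℝ) (hat : IsLassoMin lam Dt x at') :
    |(norm2 (D.mulVec at'))^2 - (norm2 (Dt.mulVec at'))^2|
      ≤ ((3/4) * norm2 x + 2) * (norm2 x)^3 * norm12 (D - Dt) / lam := by
  have hperturb := abs_sq_norm2_sub_sq_norm2_le (D *ᵥ at') (Dt *ᵥ at')
  rw [← sub_mulVec] at hperturb
  set X := norm2 x
  set n := norm12 (D - Dt)
  set e := norm2 ((D - Dt) *ᵥ at')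
  have hX : 0 ≤ X := norm2_nonneg x
  have hn : 0 ≤ n := norm12_nonneg _
  have he : e ≤ n * X ^ 2 / (2 * lam) := by
    have hA : norm1 at' ≤ X ^ 2 / (2 * lam) := by
      rw [le_div_iff₀ (by positivity)]; linarith [hat.lam_mul_norm1_le]
    calc e ≤ n * norm1 at' := norm2_mulVec_le_norm12_mul_norm1 _ _
      _ ≤ n * X ^ 2 / (2 * lam) := by rw [mul_div_assoc]; gcongr
  have he' : e ≤ X ^ 2 / 2 := he.trans (by
    rw [div_le_div_iff₀ (by positivity) two_pos]; nlinarith [sq_nonneg X])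
  calc |norm2 (D *ᵥ at') ^ 2 - norm2 (Dt *ᵥ at') ^ 2|
      ≤ (2 * norm2 (Dt *ᵥ at') + e) * e := hperturb
    _ ≤ (2 * (2 * X) + X ^ 2 / 2) * (n * X ^ 2 / (2 * lam)) := by
        gcongr
        · exact norm2_nonneg _
        · exact hat.norm2_mulVec_le hlam.le
    _ = (X / 4 + 2) * X ^ 3 * n / lam := by field_simp; ring
    _ ≤ (3 / 4 * X + 2) * X ^ 3 * n / lam := by gcongr; linarith

theorem reconstructor_cross_norm_stability {d m : ℕ} (lam : ℝ) (hlam : 0 < lam)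
    (D Dt : Matrix (Fin d) (Fin m) ℝ) (hD : IsDictionary D) (hDt : IsDictionary Dt)
    (hclose : norm12 (D - Dt) ≤ lam) (x : Fin d → ℝ)
    (at' : Fin m → ℝ) (hat : IsLassoMin lam Dt x at') :
    |(norm2 (D.mulVec at'))^2 - (norm2 (Dt.mulVec at'))^2|
      ≤ ((3/4) * norm2 x + 2) * (norm2 x)^3 * norm12 (D - Dt) / lam :=
  reconstructor_cross_norm_stability_general lam hlam D Dt hclose x at' hat
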